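/- Let K be a field of characteristic zero, V a K-vector space, G a group, and ρ : G → GL(V) a group homomorphism into the group of linear automorphisms of V. Let S ⊆ G be a subset generating G such that ρ(s) is unipotent (i.e., ρ(s) − id_V is nilpotent) for every s ∈ S, and let H be a subgroup of G of finite index. If v ∈ V satisfies ρ(h) v = v for all h ∈ H, then ρ(g) v = v for all g ∈ G. -/

import Mathlib

/-!
Write `N = u - 1` for a unipotent `u`. Then `u ^ n - 1 = (1 + u + ⋯ + u ^ (n - 1)) N`, and the
geometric sum is `n` plus a nilpotent element commuting with it, hence a unit once `n` is
invertible. So a vector fixed by some power `u ^ n` with `n ≠ 0` is already fixed by `u`.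
A finite-index subgroup contains a positive power of every element, so the stabilizer of `v`
contains every unipotent generator, hence is everything.
-/

open Finset

section Unipotent

variable {A : Type*} [Ring A] {u : A}

lemma IsNilpotent.pow_sub_one (hu : IsNilpotent (u - 1)) (i : ℕ) : IsNilpotent (u ^ i - 1) := by
  rw [← mul_geom_sum]
  refine Commute.isNilpotent_mul_right ?_ hu
  exact Commute.sum_right _ _ _ fun j _ ↦ ((Commute.refl u).pow_right j).sub_left (.one_left _)

lemma IsNilpotent.isUnit_geom_sum (hu : IsNilpotent (u - 1)) {n : ℕ} (hn : IsUnit (n : A)) :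
    IsUnit (∑ i ∈ range n, u ^ i) := by
  have hsum : ∑ i ∈ range n, u ^ i = n + ∑ i ∈ range n, (u ^ i - 1) := by
    simp [sum_sub_distrib]
  have hcomm : ∀ i j : ℕ, Commute (u ^ i - 1) (u ^ j - 1) := fun i j ↦
    (((Commute.refl u).pow_pow i j).sub_left (.one_left _)).sub_right (.one_right _)
  rw [hsum]
  refine IsNilpotent.isUnit_add_left_of_commute ?_ hn (Nat.cast_commute _ _).symm
  exact Commute.isNilpotent_sum (fun i _ ↦ hu.pow_sub_one i) fun i j _ _ ↦ hcomm i j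

lemma IsNilpotent.smul_eq_of_pow_smul_eq {M : Type*} [AddCommGroup M] [Module A M]
    (hu : IsNilpotent (u - 1)) {n : ℕ} (hn : IsUnit (n : A)) {v : M} (hv : u ^ n • v = v) :
    u • v = v := by
  have hker : (∑ i ∈ range n, u ^ i) • ((u - 1) • v) = 0 := by
    rw [smul_smul, geom_sum_mul, sub_smul, one_smul, hv, sub_self]
  rw [(hu.isUnit_geom_sum hn).smul_eq_zero, sub_smul, one_smul, sub_eq_zero] at hker
  exact hker

end Unipotent

lemma Subgroup.eq_top_of_finiteIndex_le {G : Type*} [Group G] {H T : Subgroup G}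
    [H.FiniteIndex] (hHT : H ≤ T) {S : Set G} (hS : Subgroup.closure S = ⊤)
    (hroot : ∀ s ∈ S, ∀ n ≠ 0, s ^ n ∈ T → s ∈ T) : T = ⊤ := by
  rw [eq_top_iff, ← hS, Subgroup.closure_le]
  intro s hs
  obtain ⟨n, hn, -, hsn⟩ :=
    exists_pow_mem_of_index_ne_zero (FiniteIndex.index_ne_zero (H := H)) s
  exact hroot s hs n hn.ne' (hHT hsn)

/-- Let `ρ : G → GL(V)` be a representation over a field of characteristic zero such
that `G` is generated by a set `S` of elements acting unipotently, and let `H ≤ G` be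
a subgroup of finite index. Then any vector fixed by `H` is fixed by all of `G`. -/
theorem fixed_by_finite_index_of_unipotent_generators
    {K : Type*} [Field K] [CharZero K] {V : Type*} [AddCommGroup V] [Module K V]
    {G : Type*} [Group G] (ρ : G →* (Module.End K V)ˣ)
    (S : Set G) (hS : Subgroup.closure S = ⊤)
    (hunip : ∀ s ∈ S, ∃ m : ℕ, ((ρ s : Module.End K V) - 1) ^ m = 0)
    (H : Subgroup G) (hH : H.FiniteIndex)
    (v : V) (hv : ∀ h ∈ H, (ρ h : Module.End K V) v = v) :
    ∀ g : G, (ρ g : Module.End K V) v = v := by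
  have hmem : ∀ g, g ∈ (MulAction.stabilizer (Module.End K V)ˣ v).comap ρ ↔
      (ρ g : Module.End K V) v = v := fun g ↦ by
    rw [Subgroup.mem_comap, MulAction.mem_stabilizer_iff, Units.smul_def, Module.End.smul_def]
  have hstab : (MulAction.stabilizer (Module.End K V)ˣ v).comap ρ = ⊤ := by
    refine Subgroup.eq_top_of_finiteIndex_le (H := H) (fun h hh ↦ (hmem h).2 (hv h hh)) hS
      fun s hs n hn hsn ↦ (hmem s).2 ?_
    have hn_unit : IsUnit (n : Module.End K V) := by
      simpa using (Nat.cast_ne_zero.2 hn : (n : K) ≠ 0).isUnit.map (algebraMap K (Module.End K V))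
    rw [hmem, map_pow, Units.val_pow_eq_pow_val] at hsn
    exact IsNilpotent.smul_eq_of_pow_smul_eq (hunip s hs) hn_unit hsn
  exact fun g ↦ (hmem g).1 (hstab ▸ Subgroup.mem_top g)
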